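/- Let D be a self-adjoint operator with compact resolvent on H, U a unitary corepresentation commuting with D, σ a dual unitary 2-cocycle, and A₀ an algebra of operators on which ad_U is algebraic and [D, a] is bounded for all a ∈ A₀. Then for every a ∈ A₀, writing ad_U(a) = Σᵢ a⁽ⁱ⁾₍₀₎ ⊗ a⁽ⁱ⁾₍₁₎ and defining the deformed operator ρ_σ(a) = Σᵢ a⁽ⁱ⁾₍₀₎ Π_U(σᵢ) with Π_U(σᵢ) ∈ B(H) commuting with D, one has [D, ρ_σ(a)] = Σᵢ [D, a⁽ⁱ⁾₍₀₎] Π_U(σᵢ), which is a bounded operator. Hence (A₀^σ, H, D) is again a spectral triple. -/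
import Mathlib


noncomputable section

namespace CocycleTwist

variable (H : Type) [NormedAddCommGroup H] [NormedSpace ℂ H]

/-- if `ad_U(a) = ∑ᵢ a⁽ⁱ⁾₍₀₎ ⊗ a⁽ⁱ⁾₍₁₎` is algebraic, each `[D, a⁽ⁱ⁾₍₀₎]` is
bounded, and the operators `Π_U(σᵢ)` are bounded and commute with `D`, then the deformed
operator `ρ_σ(a) = ∑ᵢ a⁽ⁱ⁾₍₀₎ Π_U(σᵢ)` satisfies
`[D, ρ_σ(a)] = ∑ᵢ [D, a⁽ⁱ⁾₍₀₎] Π_U(σᵢ)`, which is bounded; hence the deformed spectral triple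
has bounded commutators. -/
theorem commutator_of_deformed_operator (D : H →ₗ[ℂ] H) (n : ℕ)
    (a₀ Pi : Fin n → (H →ₗ[ℂ] H))
    (hcomm : ∀ i, D ∘ₗ Pi i = Pi i ∘ₗ D)
    (hPibdd : ∀ i, ∃ C : ℝ, ∀ ξ : H, ‖Pi i ξ‖ ≤ C * ‖ξ‖)
    (hDa : ∀ i, ∃ C : ℝ, ∀ ξ : H, ‖(D ∘ₗ a₀ i - a₀ i ∘ₗ D) ξ‖ ≤ C * ‖ξ‖) :
    D ∘ₗ (∑ i, a₀ i ∘ₗ Pi i) - (∑ i, a₀ i ∘ₗ Pi i) ∘ₗ D =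
      ∑ i, (D ∘ₗ a₀ i - a₀ i ∘ₗ D) ∘ₗ Pi i ∧
    ∃ C : ℝ, ∀ ξ : H,
      ‖(D ∘ₗ (∑ i, a₀ i ∘ₗ Pi i) - (∑ i, a₀ i ∘ₗ Pi i) ∘ₗ D) ξ‖ ≤ C * ‖ξ‖ := by
  have key : D ∘ₗ (∑ i, a₀ i ∘ₗ Pi i) - (∑ i, a₀ i ∘ₗ Pi i) ∘ₗ D =
      ∑ i, (D ∘ₗ a₀ i - a₀ i ∘ₗ D) ∘ₗ Pi i := by
    ext ξ
    simp only [LinearMap.sub_apply, LinearMap.comp_apply, LinearMap.coe_sum,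
      Finset.sum_apply, map_sum, ← Finset.sum_sub_distrib]
    refine Finset.sum_congr rfl fun i _ => ?_
    have h := LinearMap.congr_fun (hcomm i) ξ
    simp only [LinearMap.comp_apply] at h
    rw [← h]
  refine ⟨key, ?_⟩
  choose K hK using hPibdd
  choose C hC using hDa
  refine ⟨∑ i, max (C i) 0 * max (K i) 0, fun ξ => ?_⟩
  rw [key]
  simp only [LinearMap.sum_apply, Finset.sum_mul]
  refine (norm_sum_le _ _).trans (Finset.sum_le_sum fun i _ => ?_)
  have h1 : ‖(D ∘ₗ a₀ i - a₀ i ∘ₗ D) (Pi i ξ)‖ ≤ max (C i) 0 * ‖Pi i ξ‖ :=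
    (hC i _).trans (mul_le_mul_of_nonneg_right (le_max_left _ _) (norm_nonneg _))
  have h2 : ‖Pi i ξ‖ ≤ max (K i) 0 * ‖ξ‖ :=
    (hK i _).trans (mul_le_mul_of_nonneg_right (le_max_left _ _) (norm_nonneg _))
  calc ‖((D ∘ₗ a₀ i - a₀ i ∘ₗ D) ∘ₗ Pi i) ξ‖ = ‖(D ∘ₗ a₀ i - a₀ i ∘ₗ D) (Pi i ξ)‖ := rfl
    _ ≤ max (C i) 0 * ‖Pi i ξ‖ := h1
    _ ≤ max (C i) 0 * (max (K i) 0 * ‖ξ‖) :=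
        mul_le_mul_of_nonneg_left h2 (le_max_right _ _)
    _ = max (C i) 0 * max (K i) 0 * ‖ξ‖ := by ring


end CocycleTwist
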